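/- arXiv:2310.00999 — 3 statements merged into one kernel-verified Lean document; each statement's English description precedes it below -/
import Mathlib

section
/- The function dist on a negation-safe EDG is well-defined: the recursion dist(c) = max{dist(c'')+1 | c →* c' ⇢ c''} terminates, i.e., the relation 'c'' is a negation-successor of some hyper-edge-reachable configuration from c' is well-founded on configurations of a finite negation-safe EDG. -/
/-- An extended dependency graph over configurations `C`. -/
structure EDG (C : Type) where
  E : Set (C × Set C)
  N : Set (C × C)

variable {C : Type}

def EDG.hstep (G : EDG C) (c c' : C) : Prop := ∃ T, (c, T) ∈ G.E ∧ c' ∈ T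

def EDG.nstep (G : EDG C) (c c' : C) : Prop := (c, c') ∈ G.N

def EDG.step (G : EDG C) (c c' : C) : Prop := G.hstep c c' ∨ G.nstep c c'

def EDG.NegationSafe (G : EDG C) : Prop :=
  ¬ ∃ c c', G.nstep c c' ∧ Relation.ReflTransGen G.step c' c

private lemma rel_to_step (G : EDG C) {a b : C}
    (h : ∃ c', Relation.ReflTransGen G.hstep b c' ∧ G.nstep c' a) :
    Relation.ReflTransGen G.step b a := by
  obtain ⟨c', h1, h2⟩ := h
  exact (Relation.ReflTransGen.mono (fun x y hxy => Or.inl hxy) _ _ h1).tail (Or.inr h2)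

private lemma transGen_to_step (G : EDG C) {a b : C}
    (h : Relation.TransGen
      (fun c'' c : C => ∃ c', Relation.ReflTransGen G.hstep c c' ∧ G.nstep c' c'') a b) :
    Relation.ReflTransGen G.step b a := by
  induction h with
  | single h => exact rel_to_step G h
  | tail _ h ih => exact (rel_to_step G h).trans ih

/-- On a finite negation-safe EDG, the relation "`c''` is a negation-successor of
some hyper-edge-reachable configuration from `c`" is well-founded, so the recursion
defining `dist` terminates. -/
theorem dist_recursion_wellFounded [Fintype C] (G : EDG C) (hsafe : G.NegationSafe) :
    WellFounded (fun c'' c : C =>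
      ∃ c', Relation.ReflTransGen G.hstep c c' ∧ G.nstep c' c'') := by
  set R := fun c'' c : C => ∃ c', Relation.ReflTransGen G.hstep c c' ∧ G.nstep c' c'' with hR
  have hirr : IsIrrefl C (Relation.TransGen R) := by
    constructor
    intro c hc
    cases hc with
    | single h =>
      obtain ⟨c', h1, h2⟩ := h
      exact hsafe ⟨c', c, h2, Relation.ReflTransGen.trans (Relation.ReflTransGen.refl)
        (Relation.ReflTransGen.mono (fun x y hxy => Or.inl hxy) _ _ h1)⟩
    | tail htr hr =>
      obtain ⟨c', h1, h2⟩ := hr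
      -- htr : TransGen R c b, hr : R b c, so step* b c and step* c c'
      exact hsafe ⟨c', _, h2,
        (transGen_to_step G htr).trans (Relation.ReflTransGen.mono (fun x y hxy => Or.inl hxy) _ _ h1)⟩
  have : WellFounded (Relation.TransGen R) :=
    Finite.wellFounded_of_trans_of_irrefl _
  exact Subrelation.wf (fun h => Relation.TransGen.single h) this
end

section
/- The ATL satisfaction relation for enforce-until is a fixed point: q ⊨ ⟪A⟫(φ₁ U φ₂) if and only if q ⊨ φ₂, or (q ⊨ φ₁ and there exists 𝒱 ∈ pmoves(q, A) such that every s ∈ Δ(q, 𝒱) satisfies s ⊨ ⟪A⟫(φ₁ U φ₂)) — and moreover it is the least such fixed point. -/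
variable {k : ℕ} {Q : Type}

/-- The set `D(q)` of move vectors at state `q`. -/
def Dmoves (d : Fin k → Q → ℕ) (q : Q) : Set (Fin k → ℕ) :=
  {v | ∀ a, 1 ≤ v a ∧ v a ≤ d a q}

/-- `pmoves(q, A)`: partial moves fixing one move for each player in `A`. -/
def pmoves (d : Fin k → Q → ℕ) (q : Q) (A : Set (Fin k)) : Set (Set (Fin k → ℕ)) :=
  {V | ∃ j : Fin k → ℕ, (∀ a ∈ A, 1 ≤ j a ∧ j a ≤ d a q) ∧
    V = {v ∈ Dmoves d q | ∀ a ∈ A, v a = j a}}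

/-- The partial transition function `Δ(q, 𝒱) = {δ(q,v) | v ∈ 𝒱}`. -/
def pdelta (δ : Q → (Fin k → ℕ) → Q) (q : Q) (V : Set (Fin k → ℕ)) : Set Q :=
  (δ q) '' V

/-- A valid set of (memoryless) strategies for the players in `A`. -/
def ValidStrats (d : Fin k → Q → ℕ) (A : Set (Fin k)) (zs : Fin k → Q → ℕ) : Prop :=
  ∀ a ∈ A, ∀ q, 1 ≤ zs a q ∧ zs a q ≤ d a q

/-- `out(q, Z_A)`: computations starting at `q` enforced by the strategies `zs`. -/
def outSet (d : Fin k → Q → ℕ) (δ : Q → (Fin k → ℕ) → Q)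
    (A : Set (Fin k)) (zs : Fin k → Q → ℕ) (q : Q) : Set (ℕ → Q) :=
  {lam | lam 0 = q ∧ ∀ i, ∃ v ∈ Dmoves d (lam i),
    (∀ a ∈ A, v a = zs a (lam i)) ∧ δ (lam i) v = lam (i + 1)}

/-- `q ⊨ ⟪A⟫(φ₁ U φ₂)`: coalition `A` has memoryless strategies forcing the until. -/
def satEU (d : Fin k → Q → ℕ) (δ : Q → (Fin k → ℕ) → Q)
    (A : Set (Fin k)) (φ₁ φ₂ : Q → Prop) (q : Q) : Prop :=
  ∃ zs : Fin k → Q → ℕ, ValidStrats d A zs ∧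
    ∀ lam ∈ outSet d δ A zs q, ∃ i, φ₂ (lam i) ∧ ∀ j < i, φ₁ (lam j)

/-- Inductively defined least fixed point of the one-step unfolding. -/
inductive WLfp (d : Fin k → Q → ℕ) (δ : Q → (Fin k → ℕ) → Q)
    (A : Set (Fin k)) (φ₁ φ₂ : Q → Prop) : Q → Prop
  | base {q : Q} : φ₂ q → WLfp d δ A φ₁ φ₂ q
  | step {q : Q} (V : Set (Fin k → ℕ)) : φ₁ q → V ∈ pmoves d q A →
      (∀ s ∈ pdelta δ q V, WLfp d δ A φ₁ φ₂ s) → WLfp d δ A φ₁ φ₂ q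

/-- Finite approximations of the fixed point. -/
def Wapprox (d : Fin k → Q → ℕ) (δ : Q → (Fin k → ℕ) → Q)
    (A : Set (Fin k)) (φ₁ φ₂ : Q → Prop) : ℕ → Q → Prop
  | 0 => fun _ => False
  | n + 1 => fun q => φ₂ q ∨ (φ₁ q ∧ ∃ V ∈ pmoves d q A,
      ∀ s ∈ pdelta δ q V, Wapprox d δ A φ₁ φ₂ n s)

theorem Wapprox_mono (d : Fin k → Q → ℕ) (δ : Q → (Fin k → ℕ) → Q)
    (A : Set (Fin k)) (φ₁ φ₂ : Q → Prop) :
    ∀ {m n : ℕ}, m ≤ n → ∀ {q : Q}, Wapprox d δ A φ₁ φ₂ m q → Wapprox d δ A φ₁ φ₂ n q := by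
  intro m
  induction m with
  | zero => intro n _ q h; exact h.elim
  | succ m ih =>
    intro n hmn q h
    obtain ⟨n, rfl⟩ := Nat.exists_eq_add_of_le hmn
    have heq : m + 1 + n = (m + n) + 1 := by omega
    rw [heq]
    show Wapprox d δ A φ₁ φ₂ ((m + n) + 1) q
    rcases h with h2 | ⟨h1, V, hV, hall⟩
    · exact Or.inl h2
    · exact Or.inr ⟨h1, V, hV, fun s hs => ih (Nat.le_add_right _ _) (hall s hs)⟩

theorem WLfp_iff_exists_approx [Fintype Q] (d : Fin k → Q → ℕ) (δ : Q → (Fin k → ℕ) → Q)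
    (A : Set (Fin k)) (φ₁ φ₂ : Q → Prop) (q : Q) :
    WLfp d δ A φ₁ φ₂ q ↔ ∃ n, Wapprox d δ A φ₁ φ₂ n q := by
  classical
  constructor
  · intro h
    induction h with
    | base h2 => exact ⟨1, Or.inl h2⟩
    | @step q V h1 hV hall ih =>
      set f : Q → ℕ := fun s => if hs : ∃ n, Wapprox d δ A φ₁ φ₂ n s then Nat.find hs else 0
      refine ⟨(Finset.univ.sup f) + 1, Or.inr ⟨h1, V, hV, fun s hs => ?_⟩⟩
      have hex := ih s hs
      have h1' : Wapprox d δ A φ₁ φ₂ (f s) s := by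
        simp only [f, dif_pos hex]
        exact Nat.find_spec hex
      exact Wapprox_mono d δ A φ₁ φ₂ (Finset.le_sup (Finset.mem_univ s)) h1'
  · rintro ⟨n, hn⟩
    induction n generalizing q with
    | zero => exact hn.elim
    | succ n ih =>
      rcases hn with h2 | ⟨h1, V, hV, hall⟩
      · exact WLfp.base h2
      · exact WLfp.step V h1 hV (fun s hs => ih s (hall s hs))

theorem satEU_to_WLfp (d : Fin k → Q → ℕ) (hd : ∀ a q, 1 ≤ d a q)
    (δ : Q → (Fin k → ℕ) → Q) (A : Set (Fin k)) (φ₁ φ₂ : Q → Prop) (q : Q)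
    (h : satEU d δ A φ₁ φ₂ q) : WLfp d δ A φ₁ φ₂ q := by
  classical
  by_contra hnW
  obtain ⟨zs, hval, hout⟩ := h
  -- choose a move at every state consistent with zs, escaping WLfp when possible
  have hex : ∀ p : Q, ∃ v, v ∈ Dmoves d p ∧ (∀ a ∈ A, v a = zs a p) ∧
      (¬ WLfp d δ A φ₁ φ₂ p ∧ ¬ φ₂ p ∧ φ₁ p → ¬ WLfp d δ A φ₁ φ₂ (δ p v)) := by
    intro p
    by_cases hc : ¬ WLfp d δ A φ₁ φ₂ p ∧ ¬ φ₂ p ∧ φ₁ p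
    · obtain ⟨hnw, hn2, h1⟩ := hc
      have hVmem : {v ∈ Dmoves d p | ∀ a ∈ A, v a = zs a p} ∈ pmoves d p A :=
        ⟨fun a => zs a p, fun a ha => hval a ha p, rfl⟩
      have hnall : ¬ ∀ s ∈ pdelta δ p {v ∈ Dmoves d p | ∀ a ∈ A, v a = zs a p},
          WLfp d δ A φ₁ φ₂ s := fun hall => hnw (WLfp.step _ h1 hVmem hall)
      push_neg at hnall
      obtain ⟨s, hs, hns⟩ := hnall
      obtain ⟨v, hv, rfl⟩ := hs
      exact ⟨v, hv.1, hv.2, fun _ => hns⟩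
    · refine ⟨fun a => if a ∈ A then zs a p else 1, fun a => ?_, fun a ha => if_pos ha,
        fun hcc => absurd hcc hc⟩
      by_cases ha : a ∈ A
      · simpa [ha] using hval a ha p
      · simpa [ha] using hd a p
  choose vsel hv1 hv2 hv3 using hex
  set g : Q → Q := fun p => δ p (vsel p) with hg
  set lam : ℕ → Q := fun i => g^[i] q with hlamdef
  have hlam0 : lam 0 = q := rfl
  have hlamsucc : ∀ i, lam (i + 1) = δ (lam i) (vsel (lam i)) := by
    intro i
    simp only [hlamdef, Function.iterate_succ_apply', hg]
  have hlam : lam ∈ outSet d δ A zs q :=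
    ⟨rfl, fun i => ⟨vsel (lam i), hv1 _, hv2 _, (hlamsucc i).symm⟩⟩
  have claim : ∀ i, (∀ j < i, φ₁ (lam j)) → ¬ WLfp d δ A φ₁ φ₂ (lam i) := by
    intro i
    induction i with
    | zero => intro _; exact hnW
    | succ i ih =>
      intro hφ
      have hni := ih (fun j hj => hφ j (Nat.lt_succ_of_lt hj))
      have h2 : ¬ φ₂ (lam i) := fun h => hni (WLfp.base h)
      have h1 := hφ i (Nat.lt_succ_self i)
      rw [hlamsucc i]
      exact hv3 (lam i) ⟨hni, h2, h1⟩
  obtain ⟨i, hi2, hi1⟩ := hout lam hlam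
  exact claim i hi1 (WLfp.base hi2)

theorem WLfp_to_satEU [Fintype Q] (d : Fin k → Q → ℕ) (hd : ∀ a q, 1 ≤ d a q)
    (δ : Q → (Fin k → ℕ) → Q) (A : Set (Fin k)) (φ₁ φ₂ : Q → Prop) (q : Q)
    (h : WLfp d δ A φ₁ φ₂ q) : satEU d δ A φ₁ φ₂ q := by
  classical
  set hWn : Q → Prop := fun p => ∃ n, Wapprox d δ A φ₁ φ₂ n p with hWndef
  set rk : Q → ℕ := fun p => if hp : hWn p then Nat.find hp else 0 with hrkdef
  have hex : ∀ p : Q, ∃ j : Fin k → ℕ, (∀ a ∈ A, 1 ≤ j a ∧ j a ≤ d a p) ∧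
      (hWn p ∧ ¬ φ₂ p → φ₁ p ∧ ∀ v ∈ Dmoves d p, (∀ a ∈ A, v a = j a) →
        hWn (δ p v) ∧ rk (δ p v) < rk p) := by
    intro p
    by_cases hc : hWn p ∧ ¬ φ₂ p
    · obtain ⟨hw, h2⟩ := hc
      have hfind : Wapprox d δ A φ₁ φ₂ (Nat.find hw) p := Nat.find_spec hw
      have hne : Nat.find hw ≠ 0 := by
        intro h0; rw [h0] at hfind; exact hfind
      obtain ⟨m, hm⟩ := Nat.exists_eq_succ_of_ne_zero hne
      rw [hm] at hfind
      rcases hfind with hf2 | ⟨h1, V, hV, hall⟩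
      · exact absurd hf2 h2
      · obtain ⟨j, hj, rfl⟩ := hV
        refine ⟨j, hj, fun _ => ⟨h1, fun v hvD hva => ?_⟩⟩
        have hsmem : δ p v ∈ pdelta δ p {v ∈ Dmoves d p | ∀ a ∈ A, v a = j a} :=
          ⟨v, ⟨hvD, hva⟩, rfl⟩
        have hWs : Wapprox d δ A φ₁ φ₂ m (δ p v) := hall _ hsmem
        have hws : hWn (δ p v) := ⟨m, hWs⟩
        refine ⟨hws, ?_⟩
        have h1' : rk (δ p v) ≤ m := by
          simp only [hrkdef, dif_pos hws]
          exact Nat.find_le hWs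
        have h2' : rk p = m + 1 := by
          simp only [hrkdef, dif_pos hw]; omega
        omega
    · exact ⟨fun _ => 1, fun a _ => ⟨le_refl 1, hd a p⟩, fun hcc => absurd hcc hc⟩
  choose jsel hj1 hj2 using hex
  set zs : Fin k → Q → ℕ := fun a p => jsel p a with hzs
  refine ⟨zs, fun a ha p => hj1 p a ha, ?_⟩
  have hw0 : hWn q := (WLfp_iff_exists_approx d δ A φ₁ φ₂ q).mp h
  -- main induction on rank
  have main : ∀ n, ∀ p, hWn p → rk p ≤ n →
      ∀ lam ∈ outSet d δ A zs p, ∃ i, φ₂ (lam i) ∧ ∀ j < i, φ₁ (lam j) := by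
    intro n
    induction n using Nat.strong_induction_on with
    | _ n ih =>
      intro p hw hrk lam hlam
      obtain ⟨hlam0, hlamstep⟩ := hlam
      by_cases h2 : φ₂ p
      · exact ⟨0, by rw [hlam0]; exact h2, fun j hj => absurd hj (Nat.not_lt_zero j)⟩
      · obtain ⟨h1, hstep⟩ := hj2 p ⟨hw, h2⟩
        obtain ⟨v, hvD, hva, hvδ⟩ := hlamstep 0
        rw [hlam0] at hvD hva hvδ
        have hva' : ∀ a ∈ A, v a = jsel p a := fun a ha => hva a ha
        obtain ⟨hw1, hrk1⟩ := hstep v hvD hva'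
        rw [hvδ] at hw1 hrk1
        have hrk1n : rk (lam 1) < n := lt_of_lt_of_le hrk1 hrk
        have hlam' : (fun i => lam (i + 1)) ∈ outSet d δ A zs (lam 1) :=
          ⟨rfl, fun i => hlamstep (i + 1)⟩
        obtain ⟨i, hi2, hi1⟩ := ih (rk (lam 1)) hrk1n (lam 1) hw1 le_rfl _ hlam'
        refine ⟨i + 1, hi2, fun j hj => ?_⟩
        cases j with
        | zero => rw [hlam0]; exact h1
        | succ j => exact hi1 j (Nat.lt_of_succ_lt_succ hj)
  exact main (rk q) q hw0 le_rfl

/-- The enforce-until satisfaction relation is a fixed point of the one-step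
unfolding, and it is the least such fixed point. -/
theorem enforce_until_least_fixed_point [Fintype Q]
    (d : Fin k → Q → ℕ) (hd : ∀ a q, 1 ≤ d a q)
    (δ : Q → (Fin k → ℕ) → Q) (A : Set (Fin k)) (φ₁ φ₂ : Q → Prop) :
    (∀ q, satEU d δ A φ₁ φ₂ q ↔
      φ₂ q ∨ (φ₁ q ∧ ∃ V ∈ pmoves d q A, ∀ s ∈ pdelta δ q V, satEU d δ A φ₁ φ₂ s)) ∧
    (∀ S : Set Q,
      (∀ q, q ∈ S ↔ φ₂ q ∨ (φ₁ q ∧ ∃ V ∈ pmoves d q A, ∀ s ∈ pdelta δ q V, s ∈ S)) →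
      {q | satEU d δ A φ₁ φ₂ q} ⊆ S) := by
  have E : ∀ q, satEU d δ A φ₁ φ₂ q ↔ WLfp d δ A φ₁ φ₂ q := fun q =>
    ⟨satEU_to_WLfp d hd δ A φ₁ φ₂ q, WLfp_to_satEU d hd δ A φ₁ φ₂ q⟩
  constructor
  · intro q
    rw [E q]
    constructor
    · intro h
      cases h with
      | base h2 => exact Or.inl h2
      | step V h1 hV hall =>
        exact Or.inr ⟨h1, V, hV, fun s hs => (E s).mpr (hall s hs)⟩
    · rintro (h2 | ⟨h1, V, hV, hall⟩)
      · exact WLfp.base h2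
      · exact WLfp.step V h1 hV (fun s hs => (E s).mp (hall s hs))
  · intro S hS q hq
    have hW := (E q).mp hq
    clear hq
    induction hW with
    | base h2 => exact (hS _).mpr (Or.inl h2)
    | step V h1 hV hall ih => exact (hS _).mpr (Or.inr ⟨h1, V, hV, ih⟩)
end

section
/- In the Mexican standoff game with 3 cowboys each having health 2, the cowboy billy has no memoryless strategy that guarantees ⟪billy⟫□(billy.alive), i.e., the state formula ⟪billy⟫ invariantly (health_billy > 0) is not satisfied in the initial state. -/
/-- States of the Mexican standoff: the health of each of the 3 cowboys. -/
abbrev MSState := Fin 3 → ℕ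

/-- Initial state: every cowboy has 2 health. -/
def msInit : MSState := fun _ => 2

/-- Available actions of player `p` at state `q`: `0` = wait (always available),
`1` = shoot right (player `p + 1`), `2` = shoot left (player `p - 1`); shooting
requires both shooter and target to be alive. -/
def msAct (q : MSState) (p : Fin 3) : Set ℕ :=
  {a | a = 0 ∨ (a = 1 ∧ 0 < q p ∧ 0 < q (p + 1)) ∨ (a = 2 ∧ 0 < q p ∧ 0 < q (p - 1))}

/-- Transition: each cowboy's health decreases by the number of bullets hitting him
(truncated at 0): he is hit by his left neighbour shooting right and his right
neighbour shooting left. -/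
def msStep (q : MSState) (v : Fin 3 → ℕ) : MSState := fun p =>
  q p - ((if v (p - 1) = 1 then 1 else 0) + (if v (p + 1) = 2 then 1 else 0))

/-- The computations from `q₀` consistent with billy (player 0) following the
memoryless strategy `z`, while the other players act arbitrarily. -/
def msOut (z : MSState → ℕ) (q₀ : MSState) : Set (ℕ → MSState) :=
  {lam | lam 0 = q₀ ∧ ∀ i, ∃ v : Fin 3 → ℕ,
    (∀ p, v p ∈ msAct (lam i) p) ∧ v 0 = z (lam i) ∧ msStep (lam i) v = lam (i + 1)}

/-- Action vector used against billy at step `i` (state `q`): in round 0, players 1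
and 2 both shoot billy; afterwards they wait. Billy follows `z`. -/
def msAdv (z : MSState → ℕ) (i : ℕ) (q : MSState) : Fin 3 → ℕ :=
  fun p => if p = 0 then z q else if i = 0 then (if p = 1 then 2 else 1) else 0

/-- The counter-computation: billy follows `z`, others follow `msAdv`. -/
def msRun (z : MSState → ℕ) : ℕ → MSState
  | 0 => msInit
  | (i + 1) => msStep (msRun z i) (msAdv z i (msRun z i))

/-- In the Mexican standoff with 3 cowboys of health 2, billy has no memoryless
strategy guaranteeing `⟪billy⟫□ billy.alive`: the formula is not satisfied in the
initial state. -/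
theorem billy_cannot_stay_alive :
    ¬ ∃ z : MSState → ℕ, (∀ q, z q ∈ msAct q 0) ∧
      ∀ lam ∈ msOut z msInit, ∀ i, 0 < lam i 0 := by
  rintro ⟨z, hz, h⟩
  have hmem : msRun z ∈ msOut z msInit := by
    refine ⟨rfl, fun i => ⟨msAdv z i (msRun z i), ?_, ?_, rfl⟩⟩
    · intro p
      fin_cases p
      · simpa [msAdv] using hz (msRun z i)
      · rcases Nat.eq_zero_or_pos i with hi | hi
        · subst hi
          right; right
          refine ⟨by simp [msAdv], ?_, ?_⟩ <;> simp [msRun, msInit]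
        · left; simp [msAdv, Nat.pos_iff_ne_zero.mp hi]
      · rcases Nat.eq_zero_or_pos i with hi | hi
        · subst hi
          right; left
          refine ⟨by simp [msAdv], ?_, ?_⟩ <;> simp [msRun, msInit]
        · left; simp [msAdv, Nat.pos_iff_ne_zero.mp hi]
    · simp [msAdv]
  have h1 := h (msRun z) hmem 1
  have : msRun z 1 0 = 0 := by
    show msStep msInit (msAdv z 0 msInit) 0 = 0
    simp [msStep, msAdv, msInit, show ((0:Fin 3) - 1 = 2) from rfl, show ((0:Fin 3) + 1 = 1) from rfl]
  omega
end
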